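/- arXiv:1307.4470 — 3 statements merged into one kernel-verified Lean document; each statement's English description precedes it below -/
import Mathlib

section
/- For every HyLTL formula φ over A and FC and every hybrid trace α over A and X: α,1 ⊨ φ if and only if Σ(α),1 ⊨ γ(φ). -/
/-! ## Valus, trajectories and flow constraints -/

/-- A valuation over the variables `X`. -/
abbrev Valu (X : Type) := X → ℝ

/-- A flow constraint over `X`: a set of pairs (value, derivative) of valuations. -/
abbrev FlowConstraint (X : Type) := Set (Valu X × Valu X)

/-- A trajectory over `X`: a nonnegative duration together with a map `ℝ → Valu X`
(only its values on `[0, dur]` matter). -/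
structure Traj (X : Type) where
  dur : ℝ
  dur_nonneg : 0 ≤ dur
  f : ℝ → Valu X

namespace Traj

variable {X : Type}

/-- A trajectory satisfies a flow constraint iff at every time of its domain the pair
(value, derivative) belongs to the constraint. -/
def sat (τ : Traj X) (C : FlowConstraint X) : Prop :=
  ∀ t ∈ Set.Icc (0 : ℝ) τ.dur,
    (τ.f t, fun x => deriv (fun s => τ.f s x) t) ∈ C

def firstState (τ : Traj X) : Valu X := τ.f 0

def lastState (τ : Traj X) : Valu X := τ.f τ.dur

/-- Identification of trajectories: same duration and same values on the domain. -/
def Equiv (τ τ' : Traj X) : Prop :=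
  τ.dur = τ'.dur ∧ ∀ t ∈ Set.Icc (0 : ℝ) τ.dur, τ.f t = τ'.f t

/-- The restriction `τ↾[t,t']` of a trajectory. -/
def restrict (τ : Traj X) (t t' : ℝ) (h : t ≤ t') : Traj X :=
  ⟨t' - t, sub_nonneg.mpr h, fun s => τ.f (s + t)⟩

/-- Concatenation of two trajectories. -/
noncomputable def concat (τ₁ τ₂ : Traj X) : Traj X :=
  ⟨τ₁.dur + τ₂.dur, add_nonneg τ₁.dur_nonneg τ₂.dur_nonneg,
   fun s => if s ≤ τ₁.dur then τ₁.f s else τ₂.f (s - τ₁.dur)⟩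

end Traj

/-! ## Hybrid traces -/

/-- A hybrid trace `τ₁ a₁ τ₂ a₂ …` over `A` and `X`, 0-indexed:
`traj n` is `τ_{n+1}` and `act n` is `a_{n+1}`. -/
structure HybridTrace (X A : Type) where
  traj : ℕ → Traj X
  act : ℕ → A

/-- Concatenation `g m · g (m+1) · ⋯ · g n` of a segment of trajectories. -/
noncomputable def concatSeg {X : Type} (g : ℕ → Traj X) (m n : ℕ) : Traj X :=
  ((List.range (n - m)).map (fun i => g (m + 1 + i))).foldl Traj.concat (g m)

/-- A hybrid trace over `A ∪ {T}` (with `T = none`) has infinitely many actions in `A`. -/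
def HybridTrace.InfA {X A : Type} (β : HybridTrace X (Option A)) : Prop :=
  ∀ N, ∃ n, N ≤ n ∧ (β.act n).isSome

/-- The restriction `β↾A` of a hybrid trace over `A ∪ {T}` (with `T = none`) to `A`:
delete the occurrences of `T` and concatenate the adjacent trajectories.  (It is
intended to be applied to traces having infinitely many actions in `A`.) -/
noncomputable def HybridTrace.restrictA {X A : Type} [Inhabited A]
    (β : HybridTrace X (Option A)) : HybridTrace X A :=
  letI k : ℕ → ℕ := Nat.nth (fun n => (β.act n).isSome)
  { traj := fun i =>
      match i with
      | 0 => concatSeg β.traj 0 (k 0)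
      | i + 1 => concatSeg β.traj (k i + 1) (k (i + 1))
    act := fun i => (β.act (k i)).getD default }

/-- Identification of hybrid traces (pointwise identification of trajectories). -/
def HybridTrace.Equiv {X A : Type} (α α' : HybridTrace X A) : Prop :=
  (∀ i, (α.traj i).Equiv (α'.traj i)) ∧ ∀ i, α.act i = α'.act i

/-! ## HyLTL syntax and semantics -/

/-- HyLTL formulas over actions `A` and flow-constraint atoms `F`. -/
inductive HyLTL (A F : Type) : Type where
  | flow : F → HyLTL A F
  | act : A → HyLTL A F
  | not : HyLTL A F → HyLTL A F
  | and : HyLTL A F → HyLTL A F → HyLTL A F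
  | or : HyLTL A F → HyLTL A F → HyLTL A F
  | next : HyLTL A F → HyLTL A F
  | untl : HyLTL A F → HyLTL A F → HyLTL A F
  | rel : HyLTL A F → HyLTL A F → HyLTL A F

/-- Satisfaction of a HyLTL formula by a hybrid trace at a (0-indexed) position;
`I` interprets flow-constraint atoms.  Position `i` here is position `i+1` of the paper. -/
def HyLTL.Sat {X A F : Type} (I : F → FlowConstraint X) (α : HybridTrace X A) :
    HyLTL A F → ℕ → Prop
  | .flow f, i => (α.traj i).sat (I f)
  | .act a, i => 0 < i ∧ α.act (i - 1) = a
  | .not φ, i => ¬ HyLTL.Sat I α φ i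
  | .and φ ψ, i => HyLTL.Sat I α φ i ∧ HyLTL.Sat I α ψ i
  | .or φ ψ, i => HyLTL.Sat I α φ i ∨ HyLTL.Sat I α ψ i
  | .next φ, i => HyLTL.Sat I α φ (i + 1)
  | .untl φ ψ, i =>
      ∃ j, i ≤ j ∧ HyLTL.Sat I α ψ j ∧ ∀ k, i ≤ k → k < j → HyLTL.Sat I α φ k
  | .rel φ ψ, i =>
      ∀ j, i ≤ j → (∀ k, i ≤ k → k < j → ¬ HyLTL.Sat I α φ k) → HyLTL.Sat I α ψ j

/-- Negation normal form: negation applied only to actions and flow constraints. -/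
inductive HyLTL.NNF {A F : Type} : HyLTL A F → Prop
  | flow (f : F) : NNF (.flow f)
  | act (a : A) : NNF (.act a)
  | nflow (f : F) : NNF (.not (.flow f))
  | nact (a : A) : NNF (.not (.act a))
  | and {φ ψ} : NNF φ → NNF ψ → NNF (.and φ ψ)
  | or {φ ψ} : NNF φ → NNF ψ → NNF (.or φ ψ)
  | next {φ} : NNF φ → NNF (.next φ)
  | untl {φ ψ} : NNF φ → NNF ψ → NNF (.untl φ ψ)
  | rel {φ ψ} : NNF φ → NNF ψ → NNF (.rel φ ψ)

/-- HyLTL⁺ formulas: flow constraints occur only positively. -/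
inductive HyLTL.Positive {A F : Type} : HyLTL A F → Prop
  | flow (f : F) : Positive (.flow f)
  | act (a : A) : Positive (.act a)
  | nact (a : A) : Positive (.not (.act a))
  | and {φ ψ} : Positive φ → Positive ψ → Positive (.and φ ψ)
  | or {φ ψ} : Positive φ → Positive ψ → Positive (.or φ ψ)
  | next {φ} : Positive φ → Positive (.next φ)
  | untl {φ ψ} : Positive φ → Positive ψ → Positive (.untl φ ψ)
  | rel {φ ψ} : Positive φ → Positive ψ → Positive (.rel φ ψ)

/-- The translation π from NNF HyLTL formulas over `A` to HyLTL⁺ formulas over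
`A ∪ {T}`, where the fresh action `T` is `none` and flow atoms are semantic flow
constraints (so that the dual constraint `f̄` is the set complement `fᶜ`). -/
def piTr {X A : Type} : HyLTL A (FlowConstraint X) → HyLTL (Option A) (FlowConstraint X)
  | .flow f =>
      .and (.flow f) (.next (.untl (.and (.act none) (.flow f)) (.not (.act none))))
  | .act a => .act (some a)
  | .not (.flow f) =>
      .or (.flow fᶜ) (.next (.untl (.act none) (.and (.act none) (.flow fᶜ))))
  | .not (.act a) => .not (.act (some a))
  | .not φ => .not (piTr φ)
  | .and φ ψ => .and (piTr φ) (piTr ψ)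
  | .or φ ψ => .or (piTr φ) (piTr ψ)
  | .next φ => .next (.untl (.act none) (.and (.not (.act none)) (piTr φ)))
  | .untl φ ψ => .untl (.or (.act none) (piTr φ)) (.and (.not (.act none)) (piTr ψ))
  | .rel φ ψ => .rel (.and (.not (.act none)) (piTr φ)) (.or (.act none) (piTr ψ))

/-! ## Discrete LTL -/

/-- LTL formulas over atomic propositions `P`. -/
inductive LTL (P : Type) : Type where
  | atom : P → LTL P
  | not : LTL P → LTL P
  | and : LTL P → LTL P → LTL P
  | or : LTL P → LTL P → LTL P
  | next : LTL P → LTL P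
  | untl : LTL P → LTL P → LTL P
  | rel : LTL P → LTL P → LTL P

/-- Satisfaction of an LTL formula by a discrete sequence (0-indexed: position `i`
here is position `i+1` of the paper). -/
def LTL.Sat {P : Type} (w : ℕ → Set P) : LTL P → ℕ → Prop
  | .atom p, i => p ∈ w i
  | .not γ, i => ¬ LTL.Sat w γ i
  | .and γ δ, i => LTL.Sat w γ i ∧ LTL.Sat w δ i
  | .or γ δ, i => LTL.Sat w γ i ∨ LTL.Sat w δ i
  | .next γ, i => LTL.Sat w γ (i + 1)
  | .untl γ δ, i =>
      ∃ j, i ≤ j ∧ LTL.Sat w δ j ∧ ∀ k, i ≤ k → k < j → LTL.Sat w γ k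
  | .rel γ δ, i =>
      ∀ j, i ≤ j → (∀ k, i ≤ k → k < j → ¬ LTL.Sat w γ k) → LTL.Sat w δ j

/-- Conjunction `γ₁ ∧ (γ₂ ∧ (⋯ ∧ γₙ))` of a nonempty list of LTL formulas. -/
def LTL.bigConj {P : Type} : (l : List (LTL P)) → l ≠ [] → LTL P
  | [], h => absurd rfl h
  | [γ], _ => γ
  | γ :: δ :: l, _ => .and γ (LTL.bigConj (δ :: l) (by simp))

/-- `γ` contains no atom from `FC` (the left summand). -/
def LTL.noFC {FC B : Type} : LTL (FC ⊕ B) → Prop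
  | .atom (Sum.inl _) => False
  | .atom (Sum.inr _) => True
  | .not γ => LTL.noFC γ
  | .and γ δ => LTL.noFC γ ∧ LTL.noFC δ
  | .or γ δ => LTL.noFC γ ∧ LTL.noFC δ
  | .next γ => LTL.noFC γ
  | .untl γ δ => LTL.noFC γ ∧ LTL.noFC δ
  | .rel γ δ => LTL.noFC γ ∧ LTL.noFC δ

/-- `γ` is FC-positive: no atom from `FC` occurs within the scope of a negation. -/
def LTL.FCpos {FC B : Type} : LTL (FC ⊕ B) → Prop
  | .atom _ => True
  | .not γ => LTL.noFC γ
  | .and γ δ => LTL.FCpos γ ∧ LTL.FCpos δ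
  | .or γ δ => LTL.FCpos γ ∧ LTL.FCpos δ
  | .next γ => LTL.FCpos γ
  | .untl γ δ => LTL.FCpos γ ∧ LTL.FCpos δ
  | .rel γ δ => LTL.FCpos γ ∧ LTL.FCpos δ

/-! ## The translation γ from HyLTL to LTL -/

/-- The formula `𝐛(a)`: the conjunction of the letters in `b a` and of the negations
of the letters not in `b a` (given that `b a` is nonempty). -/
noncomputable def bEnc {A FC B : Type} [Fintype B] [DecidableEq B]
    (b : A → Finset B) (hb : ∀ a, (b a).Nonempty) (a : A) : LTL (FC ⊕ B) :=
  LTL.bigConj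
    (((b a).toList.map fun j => LTL.atom (Sum.inr j : FC ⊕ B)) ++
      ((Finset.univ \ b a).toList.map fun j => LTL.not (LTL.atom (Sum.inr j : FC ⊕ B))))
    (by
      intro h
      rcases List.append_eq_nil_iff.mp h with ⟨h1, -⟩
      exact (hb a).ne_empty (Finset.toList_eq_nil.mp (List.map_eq_nil_iff.mp h1)))

/-- The translation γ₀ from HyLTL formulas over `A` and `FC` to LTL formulas over
`AP = FC ⊎ B`. -/
noncomputable def gamma0 {A FC B : Type} [Fintype B] [DecidableEq B]
    (b : A → Finset B) (hb : ∀ a, (b a).Nonempty) :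
    HyLTL A FC → LTL (FC ⊕ B)
  | .flow f => .atom (Sum.inl f)
  | .act a => bEnc b hb a
  | .not φ => .not (gamma0 b hb φ)
  | .and φ ψ => .and (gamma0 b hb φ) (gamma0 b hb ψ)
  | .or φ ψ => .or (gamma0 b hb φ) (gamma0 b hb ψ)
  | .next φ => .next (gamma0 b hb φ)
  | .untl φ ψ => .untl (gamma0 b hb φ) (gamma0 b hb ψ)
  | .rel φ ψ => .rel (gamma0 b hb φ) (gamma0 b hb ψ)

/-- The translation `γ(φ) = (⋀_{j ∈ B} ¬ bⱼ) ∧ γ₀(φ)`. -/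
noncomputable def gammaTr {A FC B : Type} [Fintype B] [DecidableEq B]
    (b : A → Finset B) (hb : ∀ a, (b a).Nonempty) (φ : HyLTL A FC) : LTL (FC ⊕ B) :=
  LTL.bigConj
    (((Finset.univ : Finset B).toList.map fun j =>
        LTL.not (LTL.atom (Sum.inr j : FC ⊕ B))) ++ [gamma0 b hb φ])
    (by simp)

/-- The discrete sequence `Σ(α)` associated with a hybrid trace `α` (0-indexed). -/
noncomputable def SigmaTrace {X A FC B : Type}
    (I : FC → FlowConstraint X) (b : A → Finset B) (α : HybridTrace X A) :
    ℕ → Set (FC ⊕ B)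
  | 0 => Sum.inl '' {f | (α.traj 0).sat (I f)}
  | n + 1 => Sum.inl '' {f | (α.traj (n + 1)).sat (I f)} ∪ Sum.inr '' ↑(b (α.act n))

/-! ## Büchi automata -/

/-- A Büchi automaton over the alphabet `Λ` with states `Q`. -/
structure Buchi (Q Λ : Type) where
  init : Q
  tr : Set (Q × Λ × Q)
  acc : Set Q

/-- A Büchi automaton accepts an infinite word (0-indexed) iff it has a run over
it visiting some accepting state infinitely often. -/
def Buchi.Accepts {Q Λ : Type} (𝒜 : Buchi Q Λ) (w : ℕ → Λ) : Prop :=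
  ∃ r : ℕ → Q, r 0 = 𝒜.init ∧ (∀ n, (r n, w n, r (n + 1)) ∈ 𝒜.tr) ∧
    ∃ q ∈ 𝒜.acc, ∀ N, ∃ n, N ≤ n ∧ r n = q

/-! ## Hybrid automata with Büchi condition -/

/-- A hybrid automaton with Büchi acceptance condition (BHA) over `X` and `A`. -/
structure BHA (X A : Type) where
  Loc : Type
  locFinite : Finite Loc
  Edg : Set (Loc × A × Loc)
  Dyn : Loc → FlowConstraint X
  Rst : Loc × A × Loc → Set (Valu X × Valu X)
  Init : Set Loc
  Final : Set Loc

/-- Acceptance of a hybrid trace by a BHA. -/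
def BHA.Accepts {X A : Type} (H : BHA X A) (α : HybridTrace X A) : Prop :=
  ∃ ℓ : ℕ → H.Loc,
    ℓ 0 ∈ H.Init ∧
    (∀ i, (α.traj i).sat (H.Dyn (ℓ i)) ∧
      (ℓ i, α.act i, ℓ (i + 1)) ∈ H.Edg ∧
      ((α.traj i).lastState, (α.traj (i + 1)).firstState) ∈
        H.Rst (ℓ i, α.act i, ℓ (i + 1))) ∧
    ∃ l ∈ H.Final, ∀ N, ∃ n, N ≤ n ∧ ℓ n = l

/-- The BHA `ℋ_φ` constructed (as in Algorithm 1, without reachability pruning) from a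
Büchi automaton over the alphabet of subsets of `AP = FC ⊎ B`. -/
def HofBuchi {X A FC B Q : Type} [Finite Q] [Finite FC]
    (I : FC → FlowConstraint X) (b : A → Finset B)
    (𝒜 : Buchi Q (Set (FC ⊕ B))) : BHA X A where
  Loc := Q × Set FC
  locFinite := inferInstance
  Edg := {e | ∃ σ : Set (FC ⊕ B),
    (e.1.1, σ, e.2.2.1) ∈ 𝒜.tr ∧
    {f | Sum.inl f ∈ σ} = e.2.2.2 ∧
    {j | Sum.inr j ∈ σ} = ↑(b e.2.1)}
  Dyn := fun l => {p | ∀ f ∈ l.2, p ∈ I f}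
  Rst := fun _ => Set.univ
  Init := {l | ∃ σ : Set (FC ⊕ B),
    (𝒜.init, σ, l.1) ∈ 𝒜.tr ∧
    {f | Sum.inl f ∈ σ} = l.2 ∧
    {j : B | Sum.inr j ∈ σ} = ∅}
  Final := {l | l.1 ∈ 𝒜.acc}

/-! The translation γ₀ commutes with every connective, so everything reduces to the action
atoms: `𝐛(a)` holds at position `i + 1` of `Σ(α)` iff the `B`-letters there are exactly
`b a`, i.e. (by injectivity of `b`) iff the `i`-th action is `a`; at the first position
`Σ(α)` carries no `B`-letter, which is what the conjunct `⋀ ¬bⱼ` of γ records and why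
`𝐛(a)` (with `b a` nonempty) fails there. -/

theorem LTL.sat_bigConj_iff {P : Type} (w : ℕ → Set P) (i : ℕ) :
    ∀ (l : List (LTL P)) (h : l ≠ []), LTL.Sat w (LTL.bigConj l h) i ↔ ∀ γ ∈ l, LTL.Sat w γ i
  | [], h => absurd rfl h
  | [γ], _ => by simp [LTL.bigConj]
  | γ :: δ :: l, _ => by
    simp only [LTL.bigConj, LTL.Sat, LTL.sat_bigConj_iff w i (δ :: l), List.forall_mem_cons]

theorem LTL.sat_bEnc_iff {A FC B : Type} [Fintype B] [DecidableEq B]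
    (b : A → Finset B) (hb : ∀ a, (b a).Nonempty) (w : ℕ → Set (FC ⊕ B)) (a : A) (i : ℕ) :
    LTL.Sat w (bEnc b hb a) i ↔ ∀ j, (Sum.inr j : FC ⊕ B) ∈ w i ↔ j ∈ b a := by
  simp only [bEnc, LTL.sat_bigConj_iff, List.forall_mem_append, List.forall_mem_map,
    Finset.mem_toList, Finset.mem_sdiff, Finset.mem_univ, true_and, LTL.Sat]
  refine ⟨fun ⟨hpos, hneg⟩ j => ⟨fun hj => ?_, hpos j⟩,
    fun h => ⟨fun j => (h j).2, fun j => mt (h j).1⟩⟩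
  by_contra hja
  exact hneg j hja hj

section SigmaTrace

variable {X A FC B : Type} (I : FC → FlowConstraint X) (b : A → Finset B) (α : HybridTrace X A)

theorem inl_mem_sigmaTrace_iff (f : FC) (i : ℕ) :
    (Sum.inl f : FC ⊕ B) ∈ SigmaTrace I b α i ↔ (α.traj i).sat (I f) := by
  cases i <;> simp [SigmaTrace]

theorem inr_notMem_sigmaTrace_zero (j : B) : (Sum.inr j : FC ⊕ B) ∉ SigmaTrace I b α 0 := by
  simp [SigmaTrace]

theorem inr_mem_sigmaTrace_succ_iff (j : B) (i : ℕ) :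
    (Sum.inr j : FC ⊕ B) ∈ SigmaTrace I b α (i + 1) ↔ j ∈ b (α.act i) := by
  simp [SigmaTrace]

variable [Fintype B] [DecidableEq B] (hb : ∀ a, (b a).Nonempty)

theorem sat_bEnc_sigmaTrace_iff (hinj : Function.Injective b) (a : A) (i : ℕ) :
    LTL.Sat (SigmaTrace I b α) (bEnc b hb a) i ↔ 0 < i ∧ α.act (i - 1) = a := by
  rw [LTL.sat_bEnc_iff]
  cases i with
  | zero =>
    obtain ⟨j, hj⟩ := hb a
    simp only [lt_self_iff_false, false_and, iff_false]
    exact fun h => inr_notMem_sigmaTrace_zero I b α j ((h j).2 hj)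
  | succ i =>
    simp only [inr_mem_sigmaTrace_succ_iff, Nat.succ_pos, Nat.add_sub_cancel, true_and]
    exact ⟨fun h => hinj (Finset.ext h), fun h j => by rw [h]⟩

theorem sat_gamma0_sigmaTrace_iff (hinj : Function.Injective b) (φ : HyLTL A FC) (i : ℕ) :
    LTL.Sat (SigmaTrace I b α) (gamma0 b hb φ) i ↔ HyLTL.Sat I α φ i := by
  induction φ generalizing i with
  | flow f => exact inl_mem_sigmaTrace_iff I b α f i
  | act a => exact sat_bEnc_sigmaTrace_iff I b α hb hinj a i
  | not φ ih => simp only [gamma0, LTL.Sat, HyLTL.Sat, ih]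
  | and φ ψ ihφ ihψ => simp only [gamma0, LTL.Sat, HyLTL.Sat, ihφ, ihψ]
  | or φ ψ ihφ ihψ => simp only [gamma0, LTL.Sat, HyLTL.Sat, ihφ, ihψ]
  | next φ ih => simp only [gamma0, LTL.Sat, HyLTL.Sat, ih]
  | untl φ ψ ihφ ihψ => simp only [gamma0, LTL.Sat, HyLTL.Sat, ihφ, ihψ]
  | rel φ ψ ihφ ihψ => simp only [gamma0, LTL.Sat, HyLTL.Sat, ihφ, ihψ]

end SigmaTrace

theorem stmt2_general {X A FC B : Type}
    [Fintype B] [DecidableEq B]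
    (I : FC → FlowConstraint X) (b : A → Finset B)
    (hb : ∀ a, (b a).Nonempty) (hinj : Function.Injective b)
    (φ : HyLTL A FC) (α : HybridTrace X A) :
    HyLTL.Sat I α φ 0 ↔ LTL.Sat (SigmaTrace I b α) (gammaTr b hb φ) 0 := by
  have hnoLetters : ∀ j : B, LTL.Sat (SigmaTrace I b α) (.not (.atom (Sum.inr j))) 0 :=
    inr_notMem_sigmaTrace_zero I b α
  simp only [gammaTr, LTL.sat_bigConj_iff, List.forall_mem_append, List.forall_mem_map,
    List.forall_mem_singleton, Finset.mem_toList, Finset.mem_univ, forall_const,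
    sat_gamma0_sigmaTrace_iff I b α hb hinj]
  exact ⟨fun h => ⟨hnoLetters, h⟩, And.right⟩

theorem stmt2 {X A FC B : Type} [Fintype X] [Fintype A] [Fintype FC]
    [Fintype B] [DecidableEq B]
    (I : FC → FlowConstraint X) (b : A → Finset B)
    (hb : ∀ a, (b a).Nonempty) (hinj : Function.Injective b)
    (φ : HyLTL A FC) (α : HybridTrace X A) :
    HyLTL.Sat I α φ 0 ↔ LTL.Sat (SigmaTrace I b α) (gammaTr b hb φ) 0 :=
  stmt2_general I b hb hinj φ α
end

section
/- Let A be a finite set of actions and FC a finite set of flow constraints over X. For every HyLTL⁺ formula φ over A and FC there exists a hybrid automaton with Büchi condition ℋ_φ over X and A that accepts exactly those hybrid traces α over A and X with α,1 ⊨ φ. -/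
/-!
The automaton is the tableau of the formula. A location guesses the set of subformulas that
hold at the current position; edges enforce the one-step expansion laws and the action
literals, and the dynamics of a location enforces the flow constraints it promises. Because
flow constraints occur only positively, no location ever has to promise that a trajectory
violates a constraint, which its dynamics could not express. Accepting runs are thus exactly
the Hintikka sequences of the trace, and the sets of subformulas that are true form one.
The local conditions cannot force until-formulas to be discharged eventually; this
generalized Büchi condition becomes a single one through a round-robin counter.
-/

open Filter

theorem Filter.Frequently.exists_frequently_eq {α β : Type*} [Finite β] {f : Filter α}
    {F : Set β} {ℓ : α → β} (h : ∃ᶠ n in f, ℓ n ∈ F) : ∃ l ∈ F, ∃ᶠ n in f, ℓ n = l := by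
  have h' : ∃ᶠ n in f, ∃ l, l ∈ F ∧ ℓ n = l := h.mono fun n hn => ⟨ℓ n, hn, rfl⟩
  obtain ⟨l, hl⟩ := frequently_exists.1 h'
  obtain ⟨n, hlF, rfl⟩ := hl.exists
  exact ⟨ℓ n, hlF, hl.mono fun _ h => h.2⟩

namespace Temporal

def Until (p r : ℕ → Prop) (i : ℕ) : Prop :=
  ∃ j, i ≤ j ∧ r j ∧ ∀ k, i ≤ k → k < j → p k

def Release (p r : ℕ → Prop) (i : ℕ) : Prop :=
  ∀ j, i ≤ j → (∀ k, i ≤ k → k < j → ¬ p k) → r j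

variable {p r u : ℕ → Prop} {i : ℕ}

theorem Until.of_now (h : r i) : Until p r i :=
  ⟨i, le_rfl, h, fun _ hk hk' => absurd hk' (by omega)⟩

theorem Until.cons (hp : p i) (h : Until p r (i + 1)) : Until p r i := by
  obtain ⟨j, hij, hr, hpj⟩ := h
  refine ⟨j, by omega, hr, fun k hk hkj => ?_⟩
  rcases hk.eq_or_lt with rfl | hlt
  exacts [hp, hpj k hlt hkj]

theorem Until.unfold (h : Until p r i) : r i ∨ p i ∧ Until p r (i + 1) := by
  obtain ⟨j, hij, hr, hp⟩ := h
  rcases hij.eq_or_lt with rfl | hlt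
  · exact .inl hr
  · exact .inr ⟨hp i le_rfl hlt, j, hlt, hr, fun k hk => hp k (by omega)⟩

theorem Release.unfold (h : Release p r i) : r i ∧ (p i ∨ Release p r (i + 1)) := by
  refine ⟨h i le_rfl fun k hk hk' => absurd hk' (by omega), or_iff_not_imp_left.2 ?_⟩
  refine fun hp j hj hpj => h j (by omega) fun k hk hkj => ?_
  rcases hk.eq_or_lt with rfl | hlt
  exacts [hp, hpj k hlt hkj]

theorem until_of_unfold (hu : ∀ k, u k → r k ∨ p k ∧ u (k + 1))
    (hfair : ∃ᶠ n in atTop, u n → r n) (hi : u i) : Until p r i := by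
  obtain ⟨n, hin, hn⟩ := frequently_atTop.1 hfair i
  obtain ⟨d, rfl⟩ := Nat.exists_eq_add_of_le hin
  induction d generalizing i with
  | zero => exact Until.of_now (hn hi)
  | succ d ih =>
    rcases hu i hi with hr | ⟨hp, hi'⟩
    · exact Until.of_now hr
    · exact Until.cons hp (ih hi' (by omega) (by rwa [Nat.add_right_comm, Nat.add_assoc]))

theorem release_of_unfold (hu : ∀ k, u k → r k ∧ (p k ∨ u (k + 1))) (hi : u i) :
    Release p r i := by
  intro j hij hp
  have hstay : ∀ k, i ≤ k → k ≤ j → u k := by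
    intro k hik
    induction k, hik using Nat.le_induction with
    | base => exact fun _ => hi
    | succ k hik ih =>
      intro hkj
      exact ((hu k (ih (by omega))).2.resolve_left (hp k hik (by omega)))
  exact (hu j (hstay j hij le_rfl)).1

end Temporal

section RoundRobin

open Classical in
/-- The counter that degeneralizes a generalized Büchi condition with `m` acceptance
conditions `p`. -/
noncomputable def roundRobinStep {m : ℕ} (p : Fin m → Prop) (c : Fin (m + 1)) : Fin (m + 1) :=
  if h : (c : ℕ) < m then if p ⟨c, h⟩ then ⟨c + 1, by omega⟩ else c else 0

theorem roundRobinStep_last {m : ℕ} (p : Fin m → Prop) : roundRobinStep p (Fin.last m) = 0 := by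
  simp [roundRobinStep]

theorem val_roundRobinStep_of_pos {m : ℕ} {p : Fin m → Prop} {c : Fin (m + 1)}
    (h : (c : ℕ) < m) (hp : p ⟨c, h⟩) : (roundRobinStep p c : ℕ) = c + 1 := by
  simp [roundRobinStep, h, hp]

theorem roundRobinStep_of_neg {m : ℕ} {p : Fin m → Prop} {c : Fin (m + 1)}
    (h : (c : ℕ) < m) (hp : ¬ p ⟨c, h⟩) : roundRobinStep p c = c := by
  simp [roundRobinStep, h, hp]

variable {m : ℕ} {P : Fin m → ℕ → Prop} {c : ℕ → Fin (m + 1)}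

theorem exists_of_roundRobin_crosses (hc : ∀ n, c (n + 1) = roundRobinStep (P · n) (c n))
    {v : Fin m} {a b : ℕ} (hab : a ≤ b) (ha : (c a : ℕ) ≤ v) (hb : (v : ℕ) < c b) :
    ∃ t, a ≤ t ∧ t < b ∧ P v t := by
  induction b, hab using Nat.le_induction with
  | base => omega
  | succ b hab ih =>
    by_cases hvb : (v : ℕ) < c b
    · obtain ⟨t, hat, htb, hP⟩ := ih hvb
      exact ⟨t, hat, by omega, hP⟩
    · have hbm : (c b : ℕ) < m := by omega
      by_cases hP : P ⟨c b, hbm⟩ b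
      · refine ⟨b, hab, by omega, ?_⟩
        rw [hc, val_roundRobinStep_of_pos hbm hP] at hb
        rwa [show v = ⟨c b, hbm⟩ from Fin.ext (by simp; omega)]
      · rw [hc, roundRobinStep_of_neg hbm hP] at hb
        omega

theorem frequently_of_frequently_roundRobin_last
    (hc : ∀ n, c (n + 1) = roundRobinStep (P · n) (c n))
    (h : ∃ᶠ n in atTop, c n = Fin.last m) (v : Fin m) : ∃ᶠ n in atTop, P v n := by
  refine frequently_atTop.2 fun N => ?_
  obtain ⟨n₁, hN, h₁⟩ := frequently_atTop.1 h N
  obtain ⟨n₂, h₁₂, h₂⟩ := frequently_atTop.1 h (n₁ + 1)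
  have hreset : c (n₁ + 1) = 0 := by rw [hc, h₁, roundRobinStep_last]
  obtain ⟨t, ht, -, hP⟩ := exists_of_roundRobin_crosses hc h₁₂ (by simp [hreset])
    (by simp [h₂])
  exact ⟨t, by omega, hP⟩

theorem frequently_roundRobin_last (hc : ∀ n, c (n + 1) = roundRobinStep (P · n) (c n))
    (h : ∀ v, ∃ᶠ n in atTop, P v n) : ∃ᶠ n in atTop, c n = Fin.last m := by
  -- Otherwise the counter settles at its largest value `k < m`, which it leaves once `P k` holds.
  intro hev
  obtain ⟨N, hN⟩ := eventually_atTop.1 hev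
  obtain ⟨k, ⟨n₀, hn₀, rfl⟩, hmax⟩ :=
    Set.exists_max_image (c '' Set.Ici N) id (Set.toFinite _) ⟨c N, N, Set.self_mem_Ici, rfl⟩
  have hk : (c n₀ : ℕ) < m := Fin.val_lt_last (hN n₀ hn₀)
  have hnoP : ∀ n, n₀ ≤ n → c n = c n₀ → ¬ P ⟨c n₀, hk⟩ n := by
    intro n hn hcn hP
    have hle : c (n + 1) ≤ c n₀ :=
      hmax _ ⟨n + 1, Set.mem_Ici.2 (by have := Set.mem_Ici.1 hn₀; omega), rfl⟩
    have hsucc : (c (n + 1) : ℕ) = c n₀ + 1 := by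
      rw [hc, hcn]
      exact val_roundRobinStep_of_pos hk hP
    exact absurd hle (by simp [Fin.le_def, hsucc])
  have hconst : ∀ n, n₀ ≤ n → c n = c n₀ := by
    intro n hn
    induction n, hn using Nat.le_induction with
    | base => rfl
    | succ n hn ih => rw [hc, ih, roundRobinStep_of_neg hk (hnoP n hn ih)]
  obtain ⟨n, hn, hP⟩ := frequently_atTop.1 (h ⟨c n₀, hk⟩) n₀
  exact hnoP n hn (hconst n hn) hP

end RoundRobin

theorem Traj.sat_setOf_forall {X : Type} {ι : Type*} {τ : Traj X} {P : ι → Prop}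
    {C : ι → FlowConstraint X} :
    τ.sat {p | ∀ i, P i → p ∈ C i} ↔ ∀ i, P i → τ.sat (C i) :=
  ⟨fun h i hi t ht => h t ht i hi, fun h t ht i hi => h i hi t ht⟩

def HybridTrace.prevAct {X A : Type} (α : HybridTrace X A) : ℕ → Option A
  | 0 => none
  | i + 1 => some (α.act i)

namespace HyLTL

variable {X A F : Type}

def subformulas : HyLTL A F → List (HyLTL A F)
  | .flow f => [.flow f]
  | .act a => [.act a]
  | .not φ => .not φ :: φ.subformulas
  | .and φ ψ => .and φ ψ :: (φ.subformulas ++ ψ.subformulas)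
  | .or φ ψ => .or φ ψ :: (φ.subformulas ++ ψ.subformulas)
  | .next φ => .next φ :: φ.subformulas
  | .untl φ ψ => .untl φ ψ :: (φ.subformulas ++ ψ.subformulas)
  | .rel φ ψ => .rel φ ψ :: (φ.subformulas ++ ψ.subformulas)

@[simp]
theorem mem_subformulas_self (φ : HyLTL A F) : φ ∈ φ.subformulas := by
  cases φ <;> simp [subformulas]

theorem mem_subformulas_trans {Φ χ ξ : HyLTL A F} (hχ : χ ∈ Φ.subformulas)
    (hξ : ξ ∈ χ.subformulas) : ξ ∈ Φ.subformulas := by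
  induction Φ <;> aesop (add norm simp subformulas)

theorem Positive.of_mem_subformulas {Φ χ : HyLTL A F} (hΦ : Φ.Positive)
    (hχ : χ ∈ Φ.subformulas) : χ.Positive := by
  induction hΦ <;> aesop (add norm simp subformulas, safe constructors Positive)

theorem Positive.exists_eq_act_of_not {ξ : HyLTL A F} (h : (HyLTL.not ξ).Positive) :
    ∃ a, ξ = .act a := by
  cases h with
  | nact a => exact ⟨a, rfl⟩

variable {I : F → FlowConstraint X} {α : HybridTrace X A}

theorem sat_act_iff {a : A} {i : ℕ} : Sat I α (.act a) i ↔ α.prevAct i = some a := by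
  cases i <;> simp [Sat, HybridTrace.prevAct]

theorem sat_untl_iff {φ ψ : HyLTL A F} {i : ℕ} :
    Sat I α (.untl φ ψ) i ↔ Temporal.Until (Sat I α φ) (Sat I α ψ) i := Iff.rfl

theorem sat_rel_iff {φ ψ : HyLTL A F} {i : ℕ} :
    Sat I α (.rel φ ψ) i ↔ Temporal.Release (Sat I α φ) (Sat I α ψ) i := Iff.rfl

def LiteralsHold (prev : Option A) (q : Set (HyLTL A F)) : Prop :=
  (∀ a, .act a ∈ q → prev = some a) ∧ ∀ ξ, .not ξ ∈ q → ∃ a, ξ = .act a ∧ prev ≠ some a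

def Unfolds (q q' : Set (HyLTL A F)) : Prop :=
  ∀ χ ∈ q, match χ with
  | .and φ ψ => φ ∈ q ∧ ψ ∈ q
  | .or φ ψ => φ ∈ q ∨ ψ ∈ q
  | .next φ => φ ∈ q'
  | .untl φ ψ => ψ ∈ q ∨ φ ∈ q ∧ .untl φ ψ ∈ q'
  | .rel φ ψ => ψ ∈ q ∧ (φ ∈ q ∨ .rel φ ψ ∈ q')
  | _ => True

def Fulfilled (q : Set (HyLTL A F)) : HyLTL A F → Prop
  | .untl φ ψ => .untl φ ψ ∈ q → ψ ∈ q
  | _ => True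

theorem fulfilled_of_not_mem {q : Set (HyLTL A F)} {χ : HyLTL A F} (h : χ ∉ q) :
    Fulfilled q χ := by
  cases χ <;> simp [Fulfilled, h]

structure IsHintikka (I : F → FlowConstraint X) (α : HybridTrace X A)
    (q : ℕ → Set (HyLTL A F)) : Prop where
  sat_flow : ∀ i f, .flow f ∈ q i → (α.traj i).sat (I f)
  literals : ∀ i, LiteralsHold (α.prevAct i) (q i)
  unfolds : ∀ i, Unfolds (q i) (q (i + 1))
  fair : ∀ χ, ∃ᶠ n in atTop, Fulfilled (q n) χ

variable {q : ℕ → Set (HyLTL A F)}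

theorem IsHintikka.sat_of_mem (hq : IsHintikka I α q) :
    ∀ χ i, χ ∈ q i → Sat I α χ i := by
  intro χ
  induction χ with
  | flow f => exact fun i h => hq.sat_flow i f h
  | act a => exact fun i h => sat_act_iff.2 ((hq.literals i).1 a h)
  | not ξ =>
    intro i h
    obtain ⟨a, rfl, hne⟩ := (hq.literals i).2 ξ h
    exact fun hs => hne (sat_act_iff.1 hs)
  | and φ ψ ihφ ihψ =>
    intro i h
    obtain ⟨hφ, hψ⟩ : φ ∈ q i ∧ ψ ∈ q i := hq.unfolds i _ h
    exact ⟨ihφ i hφ, ihψ i hψ⟩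
  | or φ ψ ihφ ihψ =>
    intro i h
    obtain hφ | hψ : φ ∈ q i ∨ ψ ∈ q i := hq.unfolds i _ h
    exacts [.inl (ihφ i hφ), .inr (ihψ i hψ)]
  | next φ ih => exact fun i h => ih (i + 1) (hq.unfolds i _ h)
  | untl φ ψ ihφ ihψ =>
    refine fun i hi => sat_untl_iff.2 <| Temporal.until_of_unfold
      (u := fun k => .untl φ ψ ∈ q k) (fun k hk => ?_) ((hq.fair (.untl φ ψ)).mono ?_) hi
    · obtain hψ | ⟨hφ, hk'⟩ : ψ ∈ q k ∨ φ ∈ q k ∧ .untl φ ψ ∈ q (k + 1) :=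
        hq.unfolds k _ hk
      exacts [.inl (ihψ k hψ), .inr ⟨ihφ k hφ, hk'⟩]
    · exact fun n hn hu => ihψ n (hn hu)
  | rel φ ψ ihφ ihψ =>
    refine fun i hi => sat_rel_iff.2 <| Temporal.release_of_unfold
      (u := fun k => .rel φ ψ ∈ q k) (fun k hk => ?_) hi
    obtain ⟨hψ, hφ | hk'⟩ : ψ ∈ q k ∧ (φ ∈ q k ∨ .rel φ ψ ∈ q (k + 1)) :=
      hq.unfolds k _ hk
    exacts [⟨ihψ k hψ, .inl (ihφ k hφ)⟩, ⟨ihψ k hψ, .inr hk'⟩]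

def satSets (I : F → FlowConstraint X) (α : HybridTrace X A) (Φ : HyLTL A F) (i : ℕ) :
    Set (HyLTL A F) :=
  {χ | χ ∈ Φ.subformulas ∧ Sat I α χ i}

theorem isHintikka_satSets {Φ : HyLTL A F} (hΦ : Φ.Positive) :
    IsHintikka I α (satSets I α Φ) where
  sat_flow _ _ h := h.2
  literals i := by
    refine ⟨fun a h => sat_act_iff.1 h.2, fun ξ h => ?_⟩
    obtain ⟨a, rfl⟩ := (hΦ.of_mem_subformulas h.1).exists_eq_act_of_not
    exact ⟨a, rfl, fun ha => h.2 (sat_act_iff.2 ha)⟩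
  unfolds i χ h := by
    obtain ⟨hχ, hs⟩ := h
    have sub {ξ} : ξ ∈ χ.subformulas → ξ ∈ Φ.subformulas := mem_subformulas_trans hχ
    cases χ with
    | and φ ψ =>
      exact ⟨⟨sub (by simp [subformulas]), hs.1⟩,
        ⟨sub (by simp [subformulas]), hs.2⟩⟩
    | or φ ψ =>
      exact hs.imp (⟨sub (by simp [subformulas]), ·⟩)
        (⟨sub (by simp [subformulas]), ·⟩)
    | next φ => exact ⟨sub (by simp [subformulas]), hs⟩
    | untl φ ψ =>
      exact (sat_untl_iff.1 hs).unfold.imp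
        (⟨sub (by simp [subformulas]), ·⟩)
        (fun h => ⟨⟨sub (by simp [subformulas]), h.1⟩, hχ, h.2⟩)
    | rel φ ψ =>
      obtain ⟨hψ, hnext⟩ := (sat_rel_iff.1 hs).unfold
      exact ⟨⟨sub (by simp [subformulas]), hψ⟩,
        hnext.imp (⟨sub (by simp [subformulas]), ·⟩) (⟨hχ, ·⟩)⟩
    | flow | act | not => trivial
  fair χ := by
    refine frequently_atTop.2 fun N => ?_
    cases χ with
    | untl φ ψ =>
      by_cases h : Sat I α (.untl φ ψ) N ∧ .untl φ ψ ∈ Φ.subformulas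
      · obtain ⟨⟨j, hj, hψ, -⟩, hu⟩ := h
        exact ⟨j, hj, fun _ => ⟨mem_subformulas_trans hu (by simp [subformulas]), hψ⟩⟩
      · exact ⟨N, le_rfl, fun hu => absurd ⟨hu.2, hu.1⟩ h⟩
    | _ => exact ⟨N, le_rfl, trivial⟩


/-- The incoming action of a position is checked on the edge entering its location, so
locations need not store it. -/
noncomputable def tableau (I : F → FlowConstraint X) (Φ : HyLTL A F) : BHA X A where
  Loc := {q : Set (HyLTL A F) // q ⊆ {χ | χ ∈ Φ.subformulas}} × Fin (Φ.subformulas.length + 1)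
  locFinite :=
    have : Finite {q : Set (HyLTL A F) // q ⊆ {χ | χ ∈ Φ.subformulas}} :=
      (List.finite_toSet _).finite_subsets.to_subtype
    inferInstance
  Edg := {e | Unfolds e.1.1.1 e.2.2.1.1 ∧ LiteralsHold (some e.2.1) e.2.2.1.1 ∧
    e.2.2.2 = roundRobinStep (fun v => Fulfilled e.1.1.1 Φ.subformulas[v]) e.1.2}
  Dyn l := {p | ∀ f, .flow f ∈ l.1.1 → p ∈ I f}
  Rst _ := Set.univ
  Init := {l | Φ ∈ l.1.1 ∧ LiteralsHold none l.1.1 ∧ l.2 = 0}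
  Final := {l | l.2 = Fin.last _}

variable {Φ : HyLTL A F}

theorem exists_isHintikka_of_tableau_accepts (h : (tableau I Φ).Accepts α) :
    ∃ q, IsHintikka I α q ∧ Φ ∈ q 0 := by
  obtain ⟨ℓ, hinit, hstep, l, hl, hio⟩ := h
  have hc : ∀ n, (ℓ (n + 1)).2 =
      roundRobinStep (fun v => Fulfilled (ℓ n).1.1 Φ.subformulas[v]) (ℓ n).2 :=
    fun n => (hstep n).2.1.2.2
  have hlast : ∃ᶠ n in atTop, (ℓ n).2 = Fin.last _ :=
    (frequently_atTop.2 hio).mono fun n hn => hn ▸ hl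
  refine ⟨fun n => (ℓ n).1.1, ⟨fun i => Traj.sat_setOf_forall.1 (hstep i).1,
    fun i => ?_, fun i => (hstep i).2.1.1, fun χ => ?_⟩, hinit.1⟩
  · cases i
    exacts [hinit.2.1, (hstep _).2.1.2.1]
  · by_cases hχ : χ ∈ Φ.subformulas
    · obtain ⟨v, hv, rfl⟩ := List.mem_iff_getElem.1 hχ
      exact frequently_of_frequently_roundRobin_last
        (P := fun v n => Fulfilled (ℓ n).1.1 Φ.subformulas[v]) hc hlast ⟨v, hv⟩
    · exact Frequently.of_forall fun n => fulfilled_of_not_mem fun h => hχ ((ℓ n).1.2 h)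

theorem IsHintikka.tableau_accepts {q : ℕ → Set (HyLTL A F)} (hq : IsHintikka I α q)
    (hsub : ∀ i, q i ⊆ {χ | χ ∈ Φ.subformulas}) (h0 : Φ ∈ q 0) : (tableau I Φ).Accepts α := by
  let c : ℕ → Fin (Φ.subformulas.length + 1) := fun n => Nat.rec 0
    (fun k ck => roundRobinStep (fun v => Fulfilled (q k) Φ.subformulas[v]) ck) n
  let ℓ : ℕ → (tableau I Φ).Loc := fun n => (⟨q n, hsub n⟩, c n)
  have hlast : ∃ᶠ n in atTop, ℓ n ∈ (tableau I Φ).Final :=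
    frequently_roundRobin_last (c := c) (fun _ => rfl) fun _ => hq.fair _
  have := (tableau I Φ).locFinite
  obtain ⟨l, hl, hio⟩ := hlast.exists_frequently_eq
  exact ⟨ℓ, ⟨h0, hq.literals 0, rfl⟩, fun i => ⟨Traj.sat_setOf_forall.2 (hq.sat_flow i),
    ⟨hq.unfolds i, hq.literals (i + 1), rfl⟩, trivial⟩, l, hl, frequently_atTop.1 hio⟩

end HyLTL

theorem stmt7_general {X A FC : Type}
    (I : FC → FlowConstraint X) (φ : HyLTL A FC) (hφ : φ.Positive) :
    ∃ H : BHA X A, ∀ α : HybridTrace X A,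
      H.Accepts α ↔ HyLTL.Sat I α φ 0 := by
  refine ⟨HyLTL.tableau I φ, fun α => ⟨fun h => ?_, fun h => ?_⟩⟩
  · obtain ⟨q, hq, h0⟩ := HyLTL.exists_isHintikka_of_tableau_accepts h
    exact hq.sat_of_mem φ 0 h0
  · exact (HyLTL.isHintikka_satSets hφ).tableau_accepts (fun _ _ hχ => hχ.1)
      ⟨φ.mem_subformulas_self, h⟩

theorem stmt7 {X A FC : Type} [Fintype X] [Fintype A] [Fintype FC]
    (I : FC → FlowConstraint X) (φ : HyLTL A FC) (hφ : φ.Positive) :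
    ∃ H : BHA X A, ∀ α : HybridTrace X A,
      H.Accepts α ↔ HyLTL.Sat I α φ 0 :=
  stmt7_general I φ hφ
end

section
/- Let φ be a HyLTL⁺ formula over A and FC, and let 𝒜 = (Q, q₀, δ, F) be a Büchi automaton over the alphabet of subsets of AP = FC ⊎ B whose accepted language is exactly the set of discrete sequences Σ with Σ,1 ⊨ γ(φ). Let ℋ_φ be the BHA constructed from 𝒜 as described. Then for every hybrid trace α over A and X: ℋ_φ accepts α if and only if α,1 ⊨ φ. -/
/-
The letter `b(a)` records the action entering a position, so the discrete word `Σ(α)` of a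
hybrid trace satisfies `γ₀(φ)` exactly when `α` satisfies `φ`. A location `(q, C)` of `ℋ_φ`
only *demands* the flow constraints in `C`, so an accepting run of `ℋ_φ` on `α` reads off an
accepting run of `𝒜` on a word that has the letters of `Σ(α)` from `B` but possibly fewer
letters from `FC`. Since `φ` is positive, `γ₀(φ)` has no `FC`-atom under a negation and is
therefore preserved by adding `FC`-letters; hence `Σ(α)` itself satisfies `γ(φ)`. Conversely
an accepting run of `𝒜` on `Σ(α)` gives the run of `ℋ_φ` with `C` the set of constraints that
the trajectories satisfy; its Büchi condition holds by the pigeonhole principle.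
-/

open Filter

theorem Filter.Frequently.exists_mem_frequently_eq {α L : Type*} [Finite L] {f : Filter α}
    {ℓ : α → L} {S : Set L} (h : ∃ᶠ n in f, ℓ n ∈ S) : ∃ l ∈ S, ∃ᶠ n in f, ℓ n = l := by
  by_contra! hS
  have hev : ∀ᶠ n in f, ∀ l ∈ S, ℓ n ≠ l := eventually_all.2 fun l => by
    by_cases hl : l ∈ S
    · exact (hS l hl).mono fun _ hn _ => hn
    · exact .of_forall fun _ h => absurd h hl
  obtain ⟨n, hn, hn'⟩ := (h.and_eventually hev).exists
  exact hn' _ hn rfl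

theorem Traj.sat_setOf_forall_mem {X F : Type} (τ : Traj X) (I : F → FlowConstraint X)
    (C : Set F) : τ.sat {p | ∀ f ∈ C, p ∈ I f} ↔ ∀ f ∈ C, τ.sat (I f) :=
  ⟨fun h f hf t ht => h t ht f hf, fun h t ht f hf => h f hf t ht⟩

namespace LTL

variable {P FC B : Type}

theorem sat_bigConj (w : ℕ → Set P) (i : ℕ) :
    ∀ (l : List (LTL P)) (h : l ≠ []), Sat w (bigConj l h) i ↔ ∀ γ ∈ l, Sat w γ i
  | [], h => absurd rfl h
  | [γ], _ => by simp [bigConj]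
  | γ :: δ :: l, _ => by
      rw [bigConj, Sat, sat_bigConj w i (δ :: l)]
      simp only [List.forall_mem_cons]

theorem noFC_bigConj :
    ∀ (l : List (LTL (FC ⊕ B))) (h : l ≠ []), (∀ γ ∈ l, γ.noFC) → (bigConj l h).noFC
  | [], h => absurd rfl h
  | [γ], _ => fun hl => hl γ (List.mem_singleton_self γ)
  | γ :: δ :: l, _ => fun hl =>
      ⟨hl γ List.mem_cons_self,
        noFC_bigConj (δ :: l) (List.cons_ne_nil δ l) fun x hx => hl x (List.mem_cons_of_mem _ hx)⟩

theorem FCpos_of_noFC {γ : LTL (FC ⊕ B)} (hγ : γ.noFC) : γ.FCpos := by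
  induction γ with
  | atom => trivial
  | not => exact hγ
  | next _ ih => exact ih hγ
  | and _ _ ih₁ ih₂ | or _ _ ih₁ ih₂ | untl _ _ ih₁ ih₂ | rel _ _ ih₁ ih₂ =>
      exact ⟨ih₁ hγ.1, ih₂ hγ.2⟩

theorem sat_congr_of_noFC {w w' : ℕ → Set (FC ⊕ B)}
    (hB : ∀ i, Sum.inr ⁻¹' w i = Sum.inr ⁻¹' w' i) {γ : LTL (FC ⊕ B)} (hγ : γ.noFC) (i : ℕ) :
    Sat w γ i ↔ Sat w' γ i := by
  induction γ generalizing i with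
  | atom p =>
      cases p with
      | inl => exact hγ.elim
      | inr j => exact Set.ext_iff.1 (hB i) j
  | not _ ih => exact not_congr (ih hγ i)
  | next _ ih => exact ih hγ (i + 1)
  | and _ _ ih₁ ih₂ | or _ _ ih₁ ih₂ | untl _ _ ih₁ ih₂ | rel _ _ ih₁ ih₂ =>
      simp only [Sat, ih₁ hγ.1, ih₂ hγ.2]

def FCLe (w w' : ℕ → Set (FC ⊕ B)) : Prop :=
  ∀ i, Sum.inl ⁻¹' w i ⊆ Sum.inl ⁻¹' w' i ∧ Sum.inr ⁻¹' w i = Sum.inr ⁻¹' w' i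

theorem Sat.mono_of_FCpos {w w' : ℕ → Set (FC ⊕ B)} (hw : FCLe w w') {γ : LTL (FC ⊕ B)}
    (hγ : γ.FCpos) {i : ℕ} (h : Sat w γ i) : Sat w' γ i := by
  induction γ generalizing i with
  | atom p =>
      cases p with
      | inl f => exact (hw i).1 h
      | inr j => exact Set.ext_iff.1 ((hw i).2) j |>.1 h
  | not γ =>
      exact (not_congr (sat_congr_of_noFC (fun i => (hw i).2) (γ := γ) hγ i)).1 h
  | next _ ih => exact ih hγ h
  | and _ _ ih₁ ih₂ => exact ⟨ih₁ hγ.1 h.1, ih₂ hγ.2 h.2⟩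
  | or _ _ ih₁ ih₂ => exact h.imp (ih₁ hγ.1) (ih₂ hγ.2)
  | untl _ _ ih₁ ih₂ =>
      obtain ⟨j, hij, hj, hk⟩ := h
      exact ⟨j, hij, ih₂ hγ.2 hj, fun k hik hkj => ih₁ hγ.1 (hk k hik hkj)⟩
  | rel _ _ ih₁ ih₂ =>
      exact fun j hij hk => ih₂ hγ.2 (h j hij fun k hik hkj hφ => hk k hik hkj (ih₁ hγ.1 hφ))

end LTL

section Translation

variable {A FC B : Type} [Fintype B] [DecidableEq B] (b : A → Finset B)
  (hb : ∀ a, (b a).Nonempty)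

theorem noFC_bEnc (a : A) : (bEnc (FC := FC) b hb a).noFC := by
  apply LTL.noFC_bigConj
  simp only [List.mem_append, List.mem_map]
  rintro γ (⟨j, -, rfl⟩ | ⟨j, -, rfl⟩) <;> trivial

theorem sat_bEnc (a : A) (w : ℕ → Set (FC ⊕ B)) (i : ℕ) :
    LTL.Sat w (bEnc b hb a) i ↔ Sum.inr ⁻¹' w i = ↑(b a) := by
  simp only [bEnc, LTL.sat_bigConj, List.forall_mem_append, List.forall_mem_map,
    Finset.mem_toList, LTL.Sat, Finset.mem_sdiff, Finset.mem_univ, true_and, Set.ext_iff,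
    Set.mem_preimage, Finset.mem_coe]
  exact ⟨fun h j => ⟨not_imp_not.1 (h.2 j), h.1 j⟩,
    fun h => ⟨fun j => (h j).2, fun j => mt (h j).1⟩⟩

theorem FCpos_gamma0 {φ : HyLTL A FC} (hφ : φ.Positive) : (gamma0 b hb φ).FCpos := by
  induction hφ with
  | flow => trivial
  | act a => exact LTL.FCpos_of_noFC (noFC_bEnc b hb a)
  | nact a => exact noFC_bEnc b hb a
  | next _ ih => exact ih
  | and _ _ ih₁ ih₂ | or _ _ ih₁ ih₂ | untl _ _ ih₁ ih₂ | rel _ _ ih₁ ih₂ => exact ⟨ih₁, ih₂⟩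

theorem sat_gammaTr (φ : HyLTL A FC) (w : ℕ → Set (FC ⊕ B)) (i : ℕ) :
    LTL.Sat w (gammaTr b hb φ) i ↔ Sum.inr ⁻¹' w i = ∅ ∧ LTL.Sat w (gamma0 b hb φ) i := by
  simp only [gammaTr, LTL.sat_bigConj, List.mem_append, List.mem_map, Finset.mem_toList,
    Finset.mem_univ, true_and, List.mem_cons, List.not_mem_nil, or_false,
    Set.eq_empty_iff_forall_notMem, Set.mem_preimage]
  refine ⟨fun h => ⟨fun j => h _ (.inl ⟨j, rfl⟩), h _ (.inr rfl)⟩, ?_⟩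
  rintro ⟨h₁, h₂⟩ γ (⟨j, rfl⟩ | rfl)
  exacts [h₁ j, h₂]

end Translation

section SigmaTrace

variable {X A FC B : Type} (I : FC → FlowConstraint X) (b : A → Finset B) (α : HybridTrace X A)

theorem SigmaTrace_inl (i : ℕ) :
    Sum.inl ⁻¹' SigmaTrace I b α i = {f | (α.traj i).sat (I f)} := by
  cases i <;> ext <;> simp [SigmaTrace]

theorem SigmaTrace_zero_inr : Sum.inr ⁻¹' SigmaTrace I b α 0 = ∅ := by
  ext; simp [SigmaTrace]

theorem SigmaTrace_succ_inr (n : ℕ) :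
    Sum.inr ⁻¹' SigmaTrace I b α (n + 1) = ↑(b (α.act n)) := by
  ext; simp [SigmaTrace]

theorem sat_gamma0_SigmaTrace [Fintype B] [DecidableEq B] (hb : ∀ a, (b a).Nonempty)
    (hinj : Function.Injective b) (φ : HyLTL A FC) (i : ℕ) :
    LTL.Sat (SigmaTrace I b α) (gamma0 b hb φ) i ↔ HyLTL.Sat I α φ i := by
  induction φ generalizing i with
  | flow f => exact Set.ext_iff.1 (SigmaTrace_inl I b α i) f
  | act a =>
      rw [gamma0, sat_bEnc]
      cases i with
      | zero =>
          simpa [SigmaTrace_zero_inr, HyLTL.Sat] using (Finset.coe_nonempty.2 (hb a)).ne_empty.symm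
      | succ n =>
          simp [SigmaTrace_succ_inr, HyLTL.Sat, hinj.eq_iff]
  | not _ ih => exact not_congr (ih i)
  | next _ ih => exact ih (i + 1)
  | and _ _ ih₁ ih₂ | or _ _ ih₁ ih₂ | untl _ _ ih₁ ih₂ | rel _ _ ih₁ ih₂ =>
      simp only [gamma0, LTL.Sat, HyLTL.Sat, ih₁, ih₂]

end SigmaTrace

section HofBuchi

variable {X A FC B Q : Type} [Finite Q] [Finite FC] (I : FC → FlowConstraint X)
  (b : A → Finset B) (𝒜 : Buchi Q (Set (FC ⊕ B))) {α : HybridTrace X A}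

theorem HofBuchi_accepts_of_FCLe {w : ℕ → Set (FC ⊕ B)} (hw : 𝒜.Accepts w)
    (hle : LTL.FCLe w (SigmaTrace I b α)) : (HofBuchi I b 𝒜).Accepts α := by
  obtain ⟨r, hr₀, hr, q, hq, hfreq⟩ := hw
  -- location `i` pairs the state of `𝒜` *after* reading letter `i` with that letter's `FC`-part
  let ℓ : ℕ → Q × Set FC := fun i => (r (i + 1), Sum.inl ⁻¹' w i)
  have hfin : ∃ᶠ i in atTop, ℓ i ∈ (HofBuchi I b 𝒜).Final := by
    have hfreq' := frequently_atTop.2 hfreq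
    rw [← map_add_atTop_eq_nat 1, frequently_map] at hfreq'
    exact hfreq'.mono fun _ h => show r _ ∈ 𝒜.acc from h ▸ hq
  refine ⟨ℓ, ⟨w 0, hr₀ ▸ hr 0, rfl, (hle 0).2.trans (SigmaTrace_zero_inr I b α)⟩,
    fun i => ⟨?_, ⟨w (i + 1), hr (i + 1), rfl, (hle (i + 1)).2.trans (SigmaTrace_succ_inr I b α i)⟩,
      trivial⟩, ?_⟩
  · have hsat := (hle i).1
    rw [SigmaTrace_inl] at hsat
    exact (Traj.sat_setOf_forall_mem _ I _).2 hsat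
  · obtain ⟨l, hl, hl'⟩ := hfin.exists_mem_frequently_eq
    exact ⟨l, hl, frequently_atTop.1 hl'⟩

theorem BHA.Accepts.exists_FCLe_of_HofBuchi (h : (HofBuchi I b 𝒜).Accepts α) :
    ∃ w, 𝒜.Accepts w ∧ LTL.FCLe w (SigmaTrace I b α) := by
  obtain ⟨ℓ, ⟨σ₀, hσ₀, hσ₀inl, hσ₀inr⟩, hstep, l, hl, hfreq⟩ := h
  choose σ hσ hσinl hσinr using fun i => (hstep i).2.1
  let w : ℕ → Set (FC ⊕ B) := fun i => i.casesOn σ₀ σ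
  have hinl : ∀ i, Sum.inl ⁻¹' w i = (ℓ i).2 := by
    rintro (_ | i)
    exacts [hσ₀inl, hσinl i]
  have hinr : ∀ i, Sum.inr ⁻¹' w i = Sum.inr ⁻¹' SigmaTrace I b α i := by
    rintro (_ | i)
    exacts [hσ₀inr.trans (SigmaTrace_zero_inr I b α).symm,
      (hσinr i).trans (SigmaTrace_succ_inr I b α i).symm]
  refine ⟨w, ⟨fun i => i.casesOn 𝒜.init fun i => (ℓ i).1, rfl, ?_, l.1, hl, fun N => ?_⟩,
    fun i => ⟨?_, hinr i⟩⟩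
  · rintro (_ | i)
    exacts [hσ₀, hσ i]
  · obtain ⟨n, hn, hln⟩ := hfreq N
    exact ⟨n + 1, hn.trans n.le_succ, congrArg Prod.fst hln⟩
  · rw [hinl, SigmaTrace_inl]
    exact (Traj.sat_setOf_forall_mem _ I _).1 (hstep i).1

end HofBuchi

theorem stmt8_general {X A FC B Q : Type} [Fintype FC]
    [Fintype B] [DecidableEq B] [Finite Q]
    (I : FC → FlowConstraint X) (b : A → Finset B)
    (hb : ∀ a, (b a).Nonempty) (hinj : Function.Injective b)
    (φ : HyLTL A FC) (hφ : φ.Positive)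
    (𝒜 : Buchi Q (Set (FC ⊕ B)))
    (hlang : ∀ w : ℕ → Set (FC ⊕ B), 𝒜.Accepts w ↔ LTL.Sat w (gammaTr b hb φ) 0)
    (α : HybridTrace X A) :
    (HofBuchi I b 𝒜).Accepts α ↔ HyLTL.Sat I α φ 0 := by
  rw [← sat_gamma0_SigmaTrace I b α hb hinj]
  constructor
  · intro h
    obtain ⟨w, hw, hle⟩ := h.exists_FCLe_of_HofBuchi
    exact ((sat_gammaTr b hb φ w 0).1 ((hlang w).1 hw)).2.mono_of_FCpos hle (FCpos_gamma0 b hb hφ)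
  · intro h
    have hSigma : 𝒜.Accepts (SigmaTrace I b α) :=
      (hlang _).2 ((sat_gammaTr b hb φ _ 0).2 ⟨SigmaTrace_zero_inr I b α, h⟩)
    exact HofBuchi_accepts_of_FCLe I b 𝒜 hSigma fun _ => ⟨subset_rfl, rfl⟩

theorem stmt8 {X A FC B Q : Type} [Fintype X] [Fintype A] [Fintype FC]
    [Fintype B] [DecidableEq B] [Finite Q]
    (I : FC → FlowConstraint X) (b : A → Finset B)
    (hb : ∀ a, (b a).Nonempty) (hinj : Function.Injective b)
    (φ : HyLTL A FC) (hφ : φ.Positive)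
    (𝒜 : Buchi Q (Set (FC ⊕ B)))
    (hlang : ∀ w : ℕ → Set (FC ⊕ B), 𝒜.Accepts w ↔ LTL.Sat w (gammaTr b hb φ) 0)
    (α : HybridTrace X A) :
    (HofBuchi I b 𝒜).Accepts α ↔ HyLTL.Sat I α φ 0 :=
  stmt8_general I b hb hinj φ hφ 𝒜 hlang α
end
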